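/- arXiv:1507.02886 — 9 statements merged into one kernel-verified Lean document; each statement's English description precedes it below -/
import Mathlib

section
/- In the category of monoids, the class of weakly Schreier split epimorphisms is stable under pullback: if (f,s): X ⇄ Y is a split epimorphism of monoids such that for every y ∈ Y the map μ_y : Ker f → f⁻¹(y) given by μ_y(k) = k·s(y) is surjective, then any pullback of (f,s) along a monoid homomorphism g : Y' → Y again has this property. -/
/-- The pullback `P` is given up to isomorphism: by its projections `f'` and `pX`, the induced
section `s'`, joint injectivity of the projections and surjectivity onto compatible pairs. -/
theorem weaklySchreier_stable_under_pullback_general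
    {X Y Y' : Type*} [Monoid X] [Monoid Y] [Monoid Y']
    (f : X →* Y) (s : Y →* X)
    (hws : ∀ x : X, ∃ k : X, f k = 1 ∧ x = k * s (f x))
    (g : Y' →* Y)
    (P : Type*) [Monoid P] (f' : P →* Y') (pX : P →* X) (s' : Y' →* P)
    (hcomm : ∀ p, g (f' p) = f (pX p))
    (hs'1 : ∀ y', f' (s' y') = y')
    (hs'2 : ∀ y', pX (s' y') = s (g y'))
    (hmono : ∀ p q : P, f' p = f' q → pX p = pX q → p = q)
    (hsurj : ∀ (y' : Y') (x : X), g y' = f x → ∃ p : P, f' p = y' ∧ pX p = x) :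
    ∀ p : P, ∃ k : P, f' k = 1 ∧ p = k * s' (f' p) := by
  intro p
  obtain ⟨k, hk_ker, hk_fac⟩ := hws (pX p)
  -- the kernel element `k` of `f` lifts to the kernel element `(1, k)` of `f'`
  obtain ⟨kp, hkp_ker, hkp_X⟩ := hsurj 1 k (by rw [map_one, hk_ker])
  refine ⟨kp, hkp_ker, hmono _ _ ?_ ?_⟩
  · rw [map_mul, hkp_ker, hs'1, one_mul]
  · rw [map_mul, hkp_X, hs'2, hcomm, ← hk_fac]

/-- In `Mon`, weakly Schreier split epimorphisms are stable under pullback.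
`(f,s)` is a weakly Schreier split epimorphism and `(P, f', pX, s')` is (up to isomorphism)
the pullback of `(f,s)` along `g`, presented by its projections, the induced section,
joint injectivity and the universal surjectivity onto compatible pairs.  Then `(f',s')`
is again weakly Schreier. -/
theorem weaklySchreier_stable_under_pullback
    {X Y Y' : Type*} [Monoid X] [Monoid Y] [Monoid Y']
    (f : X →* Y) (s : Y →* X) (hs : ∀ y, f (s y) = y)
    (hws : ∀ x : X, ∃ k : X, f k = 1 ∧ x = k * s (f x))
    (g : Y' →* Y)
    (P : Type*) [Monoid P] (f' : P →* Y') (pX : P →* X) (s' : Y' →* P)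
    (hcomm : ∀ p, g (f' p) = f (pX p))
    (hs'1 : ∀ y', f' (s' y') = y')
    (hs'2 : ∀ y', pX (s' y') = s (g y'))
    (hmono : ∀ p q : P, f' p = f' q → pX p = pX q → p = q)
    (hsurj : ∀ (y' : Y') (x : X), g y' = f x → ∃ p : P, f' p = y' ∧ pX p = x) :
    ∀ p : P, ∃ k : P, f' k = 1 ∧ p = k * s' (f' p) :=
  weaklySchreier_stable_under_pullback_general f s hws g P f' pX s' hcomm hs'1 hs'2 hmono hsurj
end

section
/- In the category of monoids, given a pullback of split epimorphisms where (f,s) : X ⇄ Y is weakly Schreier, the pair consisting of the section s' : Y' → Y'×_Y X of the pulled-back split epimorphism and the induced section t̄ : X → Y'×_Y X (coming from a splitting t of g) is jointly extremally epic: the only submonoid of Y'×_Y X containing both s'(Y') and t̄(X) is Y'×_Y X itself. -/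
/-! Every point `(y', x)` of the pullback factors as `t̄ k * s' y'`, where `x = k * s (f x)` is a
Schreier decomposition of `x`: since `f k = 1`, the first component of `t̄ k` is `t 1 = 1`, and
`s (f x) = s (g y')` is the second component of `s' y'`. -/

theorem Prod.mk_eq_mul_of_mem_ker {X Y Y' : Type*} [Monoid X] [Monoid Y] [Monoid Y']
    {f : X →* Y} (s : Y →* X) (g : Y' →* Y) (t : Y →* Y') {y' : Y'} {x k : X}
    (hk : f k = 1) (hx : x = k * s (g y')) :
    (y', x) = (t (f k), k) * (y', s (g y')) := by
  rw [hk, map_one, hx, Prod.mk_mul_mk, one_mul]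

/-- In `Mon`, given a pullback of split epimorphisms where `(f,s)` is weakly Schreier,
the pair of induced sections `s' : Y' → Y'×_Y X` and `t̄ : X → Y'×_Y X` is jointly
extremally epic: the only submonoid of `Y'×_Y X` containing both images is everything. -/
theorem weaklySchreier_jointly_extremally_epic
    {X Y Y' : Type*} [Monoid X] [Monoid Y] [Monoid Y']
    (f : X →* Y) (s : Y →* X) (hs : ∀ y, f (s y) = y)
    (hws : ∀ x : X, ∃ k : X, f k = 1 ∧ x = k * s (f x))
    (g : Y' →* Y) (t : Y →* Y') (ht : ∀ y, g (t y) = y)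
    (P : Submonoid (Y' × X))
    (hP : ∀ p : Y' × X, p ∈ P ↔ g p.1 = f p.2)
    (W : Submonoid P)
    (hW1 : ∀ y' : Y', (⟨(y', s (g y')), (hP _).mpr (hs (g y')).symm⟩ : P) ∈ W)
    (hW2 : ∀ x : X, (⟨(t (f x), x), (hP _).mpr (ht (f x))⟩ : P) ∈ W) :
    W = ⊤ := by
  refine eq_top_iff.mpr fun ⟨⟨y', x⟩, hyx⟩ _ => ?_
  obtain ⟨k, hk, hx⟩ := hws x
  have hgf : g y' = f x := (hP _).mp hyx
  rw [← hgf] at hx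
  have hfactor : (⟨(y', x), hyx⟩ : P) =
      ⟨(t (f k), k), (hP _).mpr (ht (f k))⟩ * ⟨(y', s (g y')), (hP _).mpr (hs (g y')).symm⟩ :=
    Subtype.ext (Prod.mk_eq_mul_of_mem_ker s g t hk hx)
  exact hfactor ▸ W.mul_mem (hW2 k) (hW1 y')
end

section
/- Let E be a finitely complete category with a fibrational class Σ of split epimorphisms, making E a Σ-Mal'tsev category. Then any reflexive relation R on an object X whose underlying split epimorphism (d₀, s₀) belongs to Σ is transitive, and if moreover R is symmetric then R is an equivalence relation. -/
open CategoryTheory CategoryTheory.Limits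

universe v u

variable {C : Type u} [Category.{v} C]

/-- A pair of morphisms with common codomain is jointly extremally epic if any monomorphism
through which both factor is an isomorphism. -/
def JointlyExtremallyEpic {A B Z : C} (a : A ⟶ Z) (b : B ⟶ Z) : Prop :=
  ∀ ⦃M : C⦄ (m : M ⟶ Z), Mono m → ∀ (a' : A ⟶ M) (b' : B ⟶ M),
    a' ≫ m = a → b' ≫ m = b → IsIso m

/-- A class of split epimorphisms (with chosen splittings). -/
abbrev SigClass (C : Type u) [Category.{v} C] : Type _ :=
  ∀ ⦃X Y : C⦄, (X ⟶ Y) → (Y ⟶ X) → Prop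

/-- The class is fibrational: stable under pullback and containing the isomorphisms. -/
def Fibrational (Sig : SigClass C) : Prop :=
  (∀ ⦃X Y X' Y' : C⦄ (f : X ⟶ Y) (s : Y ⟶ X) (f' : X' ⟶ Y') (s' : Y' ⟶ X')
      (g : Y' ⟶ Y) (gbar : X' ⟶ X),
      IsPullback gbar f' f g → s ≫ f = 𝟙 Y → s' ≫ f' = 𝟙 Y' → s' ≫ gbar = g ≫ s →
      Sig f s → Sig f' s') ∧
  (∀ ⦃X Y : C⦄ (f : X ⟶ Y) (s : Y ⟶ X), IsIso f → s ≫ f = 𝟙 Y → Sig f s)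

/-- `C` is a `Σ`-Mal'tsev category: in any pullback of a split epimorphism `(f,s)` of the
class along a split epimorphism `(g,t)`, the pair of induced sections is jointly extremally
epic. -/
def SigmaMaltsev (Sig : SigClass C) : Prop :=
  ∀ ⦃X Y X' Y' : C⦄ (f : X ⟶ Y) (s : Y ⟶ X) (f' : X' ⟶ Y') (s' : Y' ⟶ X')
    (g : Y' ⟶ Y) (t : Y ⟶ Y') (gbar : X' ⟶ X) (tbar : X ⟶ X'),
    s ≫ f = 𝟙 Y → s' ≫ f' = 𝟙 Y' → t ≫ g = 𝟙 Y → tbar ≫ gbar = 𝟙 X →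
    IsPullback gbar f' f g → s' ≫ gbar = g ≫ s → tbar ≫ f' = f ≫ t →
    Sig f s → JointlyExtremallyEpic s' tbar

/-- An internal reflexive relation on `X`. -/
structure ReflRel (X : C) where
  R : C
  d0 : R ⟶ X
  d1 : R ⟶ X
  s0 : X ⟶ R
  jm : ∀ ⦃Z : C⦄ (a b : Z ⟶ R), a ≫ d0 = b ≫ d0 → a ≫ d1 = b ≫ d1 → a = b
  r0 : s0 ≫ d0 = 𝟙 X
  r1 : s0 ≫ d1 = 𝟙 X

def ReflRel.Symm {X : C} (R : ReflRel X) : Prop :=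
  ∃ σ : R.R ⟶ R.R, σ ≫ R.d0 = R.d1 ∧ σ ≫ R.d1 = R.d0

def ReflRel.Trans [HasPullbacks C] {X : C} (R : ReflRel X) : Prop :=
  ∃ t : pullback R.d1 R.d0 ⟶ R.R,
    t ≫ R.d0 = pullback.fst R.d1 R.d0 ≫ R.d0 ∧
    t ≫ R.d1 = pullback.snd R.d1 R.d0 ≫ R.d1

def ReflRel.IsEquiv [HasPullbacks C] {X : C} (R : ReflRel X) : Prop :=
  R.Symm ∧ R.Trans

/-- A connector for a pair of reflexive relations, satisfying the Mal'tsev identities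
`p(xRxSy) = y` and `p(xRySy) = x`. -/
def IsConnector [HasPullbacks C] {X : C} (R S : ReflRel X) (p : pullback R.d1 S.d0 ⟶ X) : Prop :=
  pullback.lift (S.d0 ≫ R.s0) (𝟙 S.R) (by simp [R.r1]) ≫ p = S.d1 ∧
  pullback.lift (𝟙 R.R) (R.d1 ≫ S.s0) (by simp [S.r0]) ≫ p = R.d0

/-- `[R,S] = 0` : the pair of reflexive relations admits a connector. -/
def Centralize [HasPullbacks C] {X : C} (R S : ReflRel X) : Prop :=
  ∃ p, IsConnector R S p

/-- The kernel relation of a morphism. -/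
noncomputable def kerRel [HasPullbacks C] {A B : C} (f : A ⟶ B) : ReflRel A where
  R := pullback f f
  d0 := pullback.fst f f
  d1 := pullback.snd f f
  s0 := pullback.lift (𝟙 A) (𝟙 A) rfl
  jm := fun _ a b h0 h1 => pullback.hom_ext h0 h1
  r0 := pullback.lift_fst _ _ _
  r1 := pullback.lift_snd _ _ _

/-!
Write `P = R ×_X R` for the object of composable pairs `(x R y, y R z)`. Inside `P` the pairs
with `x R z` form the subobject obtained by pulling back the mono `⟨d₀, d₁⟩ : R ⟶ X × X` along
`⟨x, z⟩ : P ⟶ X × X`. The two sections `r ↦ (r, s₀ (d₁ r))` and `r ↦ (s₀ (d₀ r), r)` of the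
pullback `P` land in this subobject, and by the `Σ`-Mal'tsev property (applied to `(d₀, s₀) ∈ Σ`
pulled back along `d₁`) they are jointly extremally epic, so the subobject is all of `P`.
-/

namespace JointlyExtremallyEpic

variable [HasPullbacks C]

theorem exists_lift_of_mono {A B Z N W : C} {a : A ⟶ Z} {b : B ⟶ Z}
    (h : JointlyExtremallyEpic a b) (n : N ⟶ W) [Mono n] (k : Z ⟶ W)
    (a' : A ⟶ N) (ha : a' ≫ n = a ≫ k) (b' : B ⟶ N) (hb : b' ≫ n = b ≫ k) :
    ∃ l : Z ⟶ N, l ≫ n = k := by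
  have : IsIso (pullback.fst k n) :=
    h _ inferInstance (pullback.lift a a' ha.symm) (pullback.lift b b' hb.symm)
      (pullback.lift_fst _ _ _) (pullback.lift_fst _ _ _)
  exact ⟨inv (pullback.fst k n) ≫ pullback.snd k n, by
    rw [Category.assoc, ← pullback.condition, IsIso.inv_hom_id_assoc]⟩

end JointlyExtremallyEpic

namespace ReflRel

variable {X : C} (R : ReflRel X)

instance mono_prodLift [HasBinaryProduct X X] : Mono (prod.lift R.d0 R.d1) :=
  ⟨fun a b h => R.jm a b (by simpa [prod.lift_fst] using congrArg (· ≫ prod.fst) h)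
    (by simpa [prod.lift_snd] using congrArg (· ≫ prod.snd) h)⟩

variable [HasPullbacks C]

theorem jointlyExtremallyEpic_sections {Sig : SigClass C} (hmal : SigmaMaltsev Sig)
    (hR : Sig R.d0 R.s0) :
    JointlyExtremallyEpic
      (pullback.lift (𝟙 R.R) (R.d1 ≫ R.s0) (by simp [R.r0]) : R.R ⟶ pullback R.d1 R.d0)
      (pullback.lift (R.d0 ≫ R.s0) (𝟙 R.R) (by simp [R.r1])) :=
  hmal R.d0 R.s0 (pullback.fst R.d1 R.d0) _ R.d1 R.s0 (pullback.snd R.d1 R.d0) _ R.r0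
    (pullback.lift_fst _ _ _) R.r1 (pullback.lift_snd _ _ _)
    (IsPullback.of_hasPullback R.d1 R.d0).flip (pullback.lift_snd _ _ _)
    (pullback.lift_fst _ _ _) hR

theorem trans_of_sigmaMaltsev [HasBinaryProduct X X] {Sig : SigClass C}
    (hmal : SigmaMaltsev Sig) (hR : Sig R.d0 R.s0) : R.Trans := by
  obtain ⟨t, ht⟩ := (R.jointlyExtremallyEpic_sections hmal hR).exists_lift_of_mono
    (prod.lift R.d0 R.d1)
    (prod.lift (pullback.fst R.d1 R.d0 ≫ R.d0) (pullback.snd R.d1 R.d0 ≫ R.d1))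
    (𝟙 R.R) (by simp [prod.comp_lift, pullback.lift_fst_assoc, pullback.lift_snd_assoc, R.r1])
    (𝟙 R.R) (by simp [prod.comp_lift, pullback.lift_fst_assoc, pullback.lift_snd_assoc, R.r0])
  exact ⟨t, by simpa [prod.lift_fst] using congrArg (· ≫ prod.fst) ht,
    by simpa [prod.lift_snd] using congrArg (· ≫ prod.snd) ht⟩

end ReflRel

theorem sigma_relation_transitive_general [HasFiniteLimits C] (Sig : SigClass C)
    (hmal : SigmaMaltsev Sig)
    {X : C} (R : ReflRel X) (hR : Sig R.d0 R.s0) :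
    R.Trans ∧ (R.Symm → R.IsEquiv) :=
  have htrans := R.trans_of_sigmaMaltsev hmal hR
  ⟨htrans, fun hsymm => ⟨hsymm, htrans⟩⟩

/-- In a `Σ`-Mal'tsev category any `Σ`-reflexive relation is transitive, and any symmetric
`Σ`-relation is an equivalence relation. -/
theorem sigma_relation_transitive [HasFiniteLimits C] (Sig : SigClass C)
    (hfib : Fibrational Sig) (hmal : SigmaMaltsev Sig)
    {X : C} (R : ReflRel X) (hR : Sig R.d0 R.s0) :
    R.Trans ∧ (R.Symm → R.IsEquiv) :=
  sigma_relation_transitive_general Sig hmal R hR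
end

section
/- Let E be a Σ-Mal'tsev category. Then on any reflexive graph X₁ ⇉ X₀ whose split epimorphism (d₀, s₀) belongs to Σ, there is at most one internal category structure; moreover it suffices to have a composition map d₁ : X₂ → X₁ satisfying d₁ ∘ s₀ = id and d₁ ∘ s₁ = id (the incidence and associativity axioms then hold automatically). -/
open CategoryTheory CategoryTheory.Limits

universe v u

variable {C : Type u} [Category.{v} C]

/-- An internal reflexive graph. -/
structure ReflGraph (C : Type u) [Category.{v} C] where
  X1 : C
  X0 : C
  d0 : X1 ⟶ X0
  d1 : X1 ⟶ X0
  s0 : X0 ⟶ X1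
  r0 : s0 ≫ d0 = 𝟙 X0
  r1 : s0 ≫ d1 = 𝟙 X0

/-- An internal category structure on a reflexive graph: a composition on the object of
composable pairs, with units, incidence and associativity axioms. -/
structure CatStr [HasPullbacks C] (G : ReflGraph C) where
  comp : pullback G.d1 G.d0 ⟶ G.X1
  unit0 : pullback.lift (G.d0 ≫ G.s0) (𝟙 G.X1) (by simp [G.r1]) ≫ comp = 𝟙 G.X1
  unit1 : pullback.lift (𝟙 G.X1) (G.d1 ≫ G.s0) (by simp [G.r0]) ≫ comp = 𝟙 G.X1
  incid0 : comp ≫ G.d0 = pullback.fst G.d1 G.d0 ≫ G.d0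
  incid1 : comp ≫ G.d1 = pullback.snd G.d1 G.d0 ≫ G.d1
  assoc : ∀ ⦃Z : C⦄ (a b c : Z ⟶ G.X1) (hab : a ≫ G.d1 = b ≫ G.d0) (hbc : b ≫ G.d1 = c ≫ G.d0)
    (w1 : (pullback.lift a b hab ≫ comp) ≫ G.d1 = c ≫ G.d0)
    (w2 : a ≫ G.d1 = (pullback.lift b c hbc ≫ comp) ≫ G.d0),
    pullback.lift _ c w1 ≫ comp = pullback.lift a _ w2 ≫ comp

/-- An internal groupoid structure on a reflexive graph. -/
structure GrpdStr [HasPullbacks C] (G : ReflGraph C) where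
  cat : CatStr G
  inv : G.X1 ⟶ G.X1
  inv_d0 : inv ≫ G.d0 = G.d1
  inv_d1 : inv ≫ G.d1 = G.d0
  linv : pullback.lift inv (𝟙 G.X1) (by rw [inv_d1]; simp) ≫ cat.comp = G.d1 ≫ G.s0
  rinv : pullback.lift (𝟙 G.X1) inv (by rw [inv_d0]; simp) ≫ cat.comp = G.d0 ≫ G.s0

/-- A centralization data on a pair of reflexive relations: a double connecting relation
in which the square containing `d0^S` and `d1^R` is a pullback. -/
structure CentData {X : C} (R S : ReflRel X) where
  W : C
  q0 : W ⟶ R.R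
  q1 : W ⟶ R.R
  r0 : W ⟶ S.R
  r1 : W ⟶ S.R
  c00 : r0 ≫ S.d0 = q0 ≫ R.d0
  c01 : r0 ≫ S.d1 = q1 ≫ R.d0
  c10 : r1 ≫ S.d0 = q0 ≫ R.d1
  c11 : r1 ≫ S.d1 = q1 ≫ R.d1
  sR : R.R ⟶ W
  sR0 : sR ≫ q0 = 𝟙 R.R
  sR1 : sR ≫ q1 = 𝟙 R.R
  sRr0 : sR ≫ r0 = R.d0 ≫ S.s0
  sRr1 : sR ≫ r1 = R.d1 ≫ S.s0
  sS : S.R ⟶ W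
  sS0 : sS ≫ r0 = 𝟙 S.R
  sS1 : sS ≫ r1 = 𝟙 S.R
  sSq0 : sS ≫ q0 = S.d0 ≫ R.s0
  sSq1 : sS ≫ q1 = S.d1 ≫ R.s0
  pb : IsPullback r1 q0 S.d0 R.d1

/-! The unit laws determine a composition `m` on the two sections `x ↦ (x, 1)` and `x ↦ (1, x)`
of `X₂`, the pullback of the `Σ`-split epimorphism `(d₀, s₀)` along the split epimorphism
`(d₁, s₀)`. In a `Σ`-Mal'tsev category these sections are jointly extremally epic, hence jointly
epic, which gives uniqueness of `m` and the incidence axioms. Associativity is the same argument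
one level up: `X₃` is the pullback of `(d₀, s₀)` along the target map `X₂ → X₀`, with jointly
epic sections `(a, b) ↦ ((a, b), 1)` and `c ↦ ((1, 1), c)`, on which both bracketings agree by
the unit laws. -/

attribute [local simp] pullback.lift_fst pullback.lift_snd pullback.lift_fst_assoc
  pullback.lift_snd_assoc

theorem JointlyExtremallyEpic.hom_ext [HasEqualizers C] {A B Z T : C} {a : A ⟶ Z} {b : B ⟶ Z}
    (h : JointlyExtremallyEpic a b) {u v : Z ⟶ T}
    (ha : a ≫ u = a ≫ v) (hb : b ≫ u = b ≫ v) : u = v := by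
  have : IsIso (equalizer.ι u v) :=
    h _ inferInstance (equalizer.lift a ha) (equalizer.lift b hb)
      (equalizer.lift_ι _ _) (equalizer.lift_ι _ _)
  rw [← cancel_epi (equalizer.ι u v)]
  exact equalizer.condition u v

theorem SigmaMaltsev.hom_ext_pullback [HasPullbacks C] [HasEqualizers C] {Sig : SigClass C}
    (hmal : SigmaMaltsev Sig) {X Y Y' T : C} {f : X ⟶ Y} {s : Y ⟶ X} {g : Y' ⟶ Y}
    {t : Y ⟶ Y'} (hfs : s ≫ f = 𝟙 Y) (htg : t ≫ g = 𝟙 Y) (hSig : Sig f s)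
    {u v : pullback g f ⟶ T}
    (h₁ : pullback.lift (𝟙 Y') (g ≫ s) (by simp [hfs]) ≫ u =
      pullback.lift (𝟙 Y') (g ≫ s) (by simp [hfs]) ≫ v)
    (h₂ : pullback.lift (f ≫ t) (𝟙 X) (by simp [htg]) ≫ u =
      pullback.lift (f ≫ t) (𝟙 X) (by simp [htg]) ≫ v) :
    u = v :=
  (hmal f s (pullback.fst g f) (pullback.lift (𝟙 Y') (g ≫ s) (by simp [hfs])) g t
    (pullback.snd g f) (pullback.lift (f ≫ t) (𝟙 X) (by simp [htg])) hfs (by simp) htg (by simp)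
    (IsPullback.of_hasPullback g f).flip (by simp) (by simp) hSig).hom_ext h₁ h₂

namespace ReflGraph

variable [HasPullbacks C] (G : ReflGraph C)

noncomputable def idComp : G.X1 ⟶ pullback G.d1 G.d0 :=
  pullback.lift (G.d0 ≫ G.s0) (𝟙 G.X1) (by simp [G.r1])

noncomputable def compId : G.X1 ⟶ pullback G.d1 G.d0 :=
  pullback.lift (𝟙 G.X1) (G.d1 ≫ G.s0) (by simp [G.r0])

/-- `(G, m)` is a multiplicative graph. -/
structure IsMultiplication (m : pullback G.d1 G.d0 ⟶ G.X1) : Prop where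
  idComp_comp : G.idComp ≫ m = 𝟙 G.X1
  compId_comp : G.compId ≫ m = 𝟙 G.X1

/-- The object `X₃` of composable triples `((a, b), c)`. -/
noncomputable abbrev Triples : C := pullback (pullback.snd G.d1 G.d0 ≫ G.d1) G.d0

noncomputable def lastPair : G.Triples ⟶ pullback G.d1 G.d0 :=
  pullback.lift (pullback.fst _ _ ≫ pullback.snd _ _) (pullback.snd _ _)
    (by simpa using pullback.condition)

/-- `(a, b) ↦ ((a, b), 1)` -/
noncomputable def pairCompId : pullback G.d1 G.d0 ⟶ G.Triples :=
  pullback.lift (𝟙 _) ((pullback.snd G.d1 G.d0 ≫ G.d1) ≫ G.s0) (by simp [G.r0])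

/-- `c ↦ ((1, 1), c)` -/
noncomputable def idIdComp : G.X1 ⟶ G.Triples :=
  pullback.lift (G.d0 ≫ G.s0 ≫ G.compId) (𝟙 G.X1) (by simp [compId, G.r1])

/-- `((a, b), c) ↦ (a b, c)` -/
noncomputable def compLeft (m : pullback G.d1 G.d0 ⟶ G.X1)
    (hm : m ≫ G.d1 = pullback.snd G.d1 G.d0 ≫ G.d1) : G.Triples ⟶ pullback G.d1 G.d0 :=
  pullback.lift (pullback.fst _ _ ≫ m) (pullback.snd _ _) (by simpa [hm] using pullback.condition)

/-- `((a, b), c) ↦ (a, b c)` -/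
noncomputable def compRight (m : pullback G.d1 G.d0 ⟶ G.X1)
    (hm : m ≫ G.d0 = pullback.fst G.d1 G.d0 ≫ G.d0) : G.Triples ⟶ pullback G.d1 G.d0 :=
  pullback.lift (pullback.fst _ _ ≫ pullback.fst _ _) (G.lastPair ≫ m)
    (by simp [hm, lastPair, pullback.condition])

variable {G} [HasEqualizers C] {Sig : SigClass C}

theorem hom_ext_pairs (hmal : SigmaMaltsev Sig) (hG : Sig G.d0 G.s0) {T : C}
    {u v : pullback G.d1 G.d0 ⟶ T} (hc : G.compId ≫ u = G.compId ≫ v)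
    (hi : G.idComp ≫ u = G.idComp ≫ v) : u = v :=
  hmal.hom_ext_pullback G.r0 G.r1 hG hc hi

theorem hom_ext_triples (hmal : SigmaMaltsev Sig) (hG : Sig G.d0 G.s0) {T : C}
    {u v : G.Triples ⟶ T} (hp : G.pairCompId ≫ u = G.pairCompId ≫ v)
    (hi : G.idIdComp ≫ u = G.idIdComp ≫ v) : u = v :=
  hmal.hom_ext_pullback G.r0 (t := G.s0 ≫ G.compId) (by simp [compId, G.r1]) hG hp hi

namespace IsMultiplication

variable {m : pullback G.d1 G.d0 ⟶ G.X1} (hm : G.IsMultiplication m)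
  (hmal : SigmaMaltsev Sig) (hG : Sig G.d0 G.s0)
include hm hmal hG

theorem eq {m' : pullback G.d1 G.d0 ⟶ G.X1} (hm' : G.IsMultiplication m') : m = m' :=
  hom_ext_pairs hmal hG (hm.compId_comp.trans hm'.compId_comp.symm)
    (hm.idComp_comp.trans hm'.idComp_comp.symm)

theorem comp_d0 : m ≫ G.d0 = pullback.fst G.d1 G.d0 ≫ G.d0 :=
  hom_ext_pairs hmal hG (by rw [reassoc_of% hm.compId_comp]; simp [compId])
    (by rw [reassoc_of% hm.idComp_comp]; simp [idComp, G.r0])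

theorem comp_d1 : m ≫ G.d1 = pullback.snd G.d1 G.d0 ≫ G.d1 :=
  hom_ext_pairs hmal hG (by rw [reassoc_of% hm.compId_comp]; simp [compId, G.r1])
    (by rw [reassoc_of% hm.idComp_comp]; simp [idComp])

theorem compLeft_comp_eq_compRight_comp :
    G.compLeft m (hm.comp_d1 hmal hG) ≫ m = G.compRight m (hm.comp_d0 hmal hG) ≫ m := by
  have hpL : G.pairCompId ≫ G.compLeft m (hm.comp_d1 hmal hG) = m ≫ G.compId := by
    apply pullback.hom_ext <;>
      simp [pairCompId, compLeft, compId, reassoc_of% hm.comp_d1 hmal hG]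
  have hpM : G.pairCompId ≫ G.lastPair = pullback.snd _ _ ≫ G.compId := by
    apply pullback.hom_ext <;> simp [pairCompId, lastPair, compId]
  have hpR : G.pairCompId ≫ G.compRight m (hm.comp_d0 hmal hG) = 𝟙 _ := by
    apply pullback.hom_ext
    · simp [pairCompId, compRight]
    · simp [compRight, reassoc_of% hpM, hm.compId_comp]
  have hiL : G.idIdComp ≫ G.compLeft m (hm.comp_d1 hmal hG) = G.idComp := by
    apply pullback.hom_ext <;> simp [idIdComp, compLeft, idComp, hm.compId_comp]
  have hiM : G.idIdComp ≫ G.lastPair = G.idComp := by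
    apply pullback.hom_ext <;> simp [idIdComp, lastPair, idComp, compId, reassoc_of% G.r1]
  have hiR : G.idIdComp ≫ G.compRight m (hm.comp_d0 hmal hG) = G.idComp := by
    apply pullback.hom_ext
    · simp [idIdComp, compRight, idComp, compId]
    · simp only [Category.assoc, compRight, pullback.lift_snd, reassoc_of% hiM, hm.idComp_comp]
      simp [idComp]
  refine hom_ext_triples hmal hG ?_ ?_
  · simp [reassoc_of% hpL, reassoc_of% hpR, hm.compId_comp]
  · rw [reassoc_of% hiL, reassoc_of% hiR]

theorem assoc ⦃Z : C⦄ (a b c : Z ⟶ G.X1) (hab : a ≫ G.d1 = b ≫ G.d0)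
    (hbc : b ≫ G.d1 = c ≫ G.d0) (w1 : (pullback.lift a b hab ≫ m) ≫ G.d1 = c ≫ G.d0)
    (w2 : a ≫ G.d1 = (pullback.lift b c hbc ≫ m) ≫ G.d0) :
    pullback.lift _ c w1 ≫ m = pullback.lift a _ w2 ≫ m := by
  let t : Z ⟶ G.Triples := pullback.lift (pullback.lift a b hab) c (by simp [hbc])
  have hl : pullback.lift _ c w1 = t ≫ G.compLeft m (hm.comp_d1 hmal hG) := by
    apply pullback.hom_ext <;> simp [t, compLeft]
  have hbc' : pullback.lift b c hbc = t ≫ G.lastPair := by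
    apply pullback.hom_ext <;> simp [t, lastPair]
  have hr : pullback.lift a _ w2 = t ≫ G.compRight m (hm.comp_d0 hmal hG) := by
    apply pullback.hom_ext <;> simp [t, compRight, hbc']
  rw [hl, hr, Category.assoc, Category.assoc, hm.compLeft_comp_eq_compRight_comp hmal hG]

end IsMultiplication

end ReflGraph

/-- In a `Σ`-Mal'tsev category, on a `Σ`-reflexive graph there is at most one internal
category structure, and a composition map satisfying the two unit axioms automatically
satisfies the incidence and associativity axioms. -/
theorem at_most_one_category_structure [HasFiniteLimits C] (Sig : SigClass C)
    (hmal : SigmaMaltsev Sig)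
    (G : ReflGraph C) (hG : Sig G.d0 G.s0) :
    (∀ m m' : pullback G.d1 G.d0 ⟶ G.X1,
        pullback.lift (G.d0 ≫ G.s0) (𝟙 G.X1) (by simp [G.r1]) ≫ m = 𝟙 G.X1 →
        pullback.lift (𝟙 G.X1) (G.d1 ≫ G.s0) (by simp [G.r0]) ≫ m = 𝟙 G.X1 →
        pullback.lift (G.d0 ≫ G.s0) (𝟙 G.X1) (by simp [G.r1]) ≫ m' = 𝟙 G.X1 →
        pullback.lift (𝟙 G.X1) (G.d1 ≫ G.s0) (by simp [G.r0]) ≫ m' = 𝟙 G.X1 →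
        m = m') ∧
    (∀ m : pullback G.d1 G.d0 ⟶ G.X1,
        pullback.lift (G.d0 ≫ G.s0) (𝟙 G.X1) (by simp [G.r1]) ≫ m = 𝟙 G.X1 →
        pullback.lift (𝟙 G.X1) (G.d1 ≫ G.s0) (by simp [G.r0]) ≫ m = 𝟙 G.X1 →
        (m ≫ G.d0 = pullback.fst G.d1 G.d0 ≫ G.d0 ∧
         m ≫ G.d1 = pullback.snd G.d1 G.d0 ≫ G.d1 ∧
         ∀ ⦃Z : C⦄ (a b c : Z ⟶ G.X1) (hab : a ≫ G.d1 = b ≫ G.d0)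
           (hbc : b ≫ G.d1 = c ≫ G.d0)
           (w1 : (pullback.lift a b hab ≫ m) ≫ G.d1 = c ≫ G.d0)
           (w2 : a ≫ G.d1 = (pullback.lift b c hbc ≫ m) ≫ G.d0),
           pullback.lift _ c w1 ≫ m = pullback.lift a _ w2 ≫ m)) := by
  refine ⟨fun m m' h₀ h₁ h₀' h₁' => ?_, fun m h₀ h₁ => ?_⟩
  · exact ReflGraph.IsMultiplication.eq ⟨h₀, h₁⟩ hmal hG ⟨h₀', h₁'⟩
  · have hm : G.IsMultiplication m := ⟨h₀, h₁⟩
    exact ⟨hm.comp_d0 hmal hG, hm.comp_d1 hmal hG, hm.assoc hmal hG⟩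
end

section
/- Let E be a regular Σ-Mal'tsev category. If R is a reflexive relation and S is a symmetric Σ-relation on the same object X, then R and S permute: R ∘ S = S ∘ R. -/
open CategoryTheory CategoryTheory.Limits

universe v u

variable {C : Type u} [Category.{v} C]

/-- `C` is a regular category: finite limits, coequalizers of kernel pairs, and regular
epimorphisms stable under pullback. -/
def RegularCat (C : Type u) [Category.{v} C] [HasFiniteLimits C] : Prop :=
  (∀ ⦃X Y : C⦄ (f : X ⟶ Y), HasCoequalizer (pullback.fst f f) (pullback.snd f f)) ∧
  (∀ ⦃W X Y Z : C⦄ (f : X ⟶ Y) (g : Z ⟶ Y) (f' : W ⟶ Z) (g' : W ⟶ X),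
      IsPullback g' f' f g → Nonempty (RegularEpi f) → Nonempty (RegularEpi f'))

/-!
By the `Σ`-Mal'tsev property, the pullback `P` of `(S.d0, S.s0) ∈ Σ` along `(R.d1, R.s0)` is
covered by its two sections `R ↪ P` and `S ↪ P`, so every relation containing `R` and `S`
contains `R ∘ S`. As `S ∘ R` contains `R` and `S` by reflexivity, `R ∘ S ≤ S ∘ R`. Passing to
opposite relations gives the converse: `S ∘ R` is the opposite of `Rᵒᵖ ∘ Sᵒᵖ`, and `Sᵒᵖ` is a
`Σ`-relation because `Σ` is fibrational and `S.d1 = σ ≫ S.d0` for the symmetry `σ`, an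
isomorphism.
-/

def JointlyMono {N Y : C} (n0 n1 : N ⟶ Y) : Prop :=
  ∀ ⦃Z : C⦄ (a b : Z ⟶ N), a ≫ n0 = b ≫ n0 → a ≫ n1 = b ≫ n1 → a = b

/-- The span `(a0, a1)` lands in the relation `(n0, n1)`. -/
def PairFactorsThrough {A N Y : C} (a0 a1 : A ⟶ Y) (n0 n1 : N ⟶ Y) : Prop :=
  ∃ u : A ⟶ N, u ≫ n0 = a0 ∧ u ≫ n1 = a1

section Pairs

variable {A N Y : C} {a0 a1 : A ⟶ Y} {n0 n1 : N ⟶ Y}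

lemma PairFactorsThrough.swap (h : PairFactorsThrough a0 a1 n0 n1) :
    PairFactorsThrough a1 a0 n1 n0 :=
  let ⟨u, h0, h1⟩ := h
  ⟨u, h1, h0⟩

lemma pairFactorsThrough_iff_prodLift [HasBinaryProduct Y Y] :
    PairFactorsThrough a0 a1 n0 n1 ↔ ∃ u : A ⟶ N, u ≫ prod.lift n0 n1 = prod.lift a0 a1 := by
  constructor
  · rintro ⟨u, h0, h1⟩
    exact ⟨u, by ext <;> simp [h0, h1]⟩
  · rintro ⟨u, hu⟩
    exact ⟨u, by simpa [prod.lift_fst] using hu =≫ prod.fst,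
      by simpa [prod.lift_snd] using hu =≫ prod.snd⟩

lemma JointlyMono.swap (h : JointlyMono n0 n1) : JointlyMono n1 n0 :=
  fun _ a b h1 h0 => h a b h0 h1

lemma JointlyMono.mono_prodLift [HasBinaryProduct Y Y] (h : JointlyMono n0 n1) :
    Mono (prod.lift n0 n1) :=
  ⟨fun a b hab => h a b (by simpa [prod.lift_fst] using hab =≫ prod.fst)
    (by simpa [prod.lift_snd] using hab =≫ prod.snd)⟩

lemma JointlyMono.exists_iso_of_pairFactorsThrough {M : C} {m0 m1 : M ⟶ Y}
    (hm : JointlyMono m0 m1) (hn : JointlyMono n0 n1)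
    (hmn : PairFactorsThrough m0 m1 n0 n1) (hnm : PairFactorsThrough n0 n1 m0 m1) :
    ∃ φ : M ≅ N, φ.hom ≫ n0 = m0 ∧ φ.hom ≫ n1 = m1 := by
  obtain ⟨φ, hφ0, hφ1⟩ := hmn
  obtain ⟨ψ, hψ0, hψ1⟩ := hnm
  exact ⟨⟨φ, ψ, hm _ _ (by simp [hψ0, hφ0]) (by simp [hψ1, hφ1]),
    hn _ _ (by simp [hψ0, hφ0]) (by simp [hψ1, hφ1])⟩, hφ0, hφ1⟩

lemma PairFactorsThrough.of_regularEpi_comp [HasBinaryProduct Y Y] {M : C} {e : A ⟶ M}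
    (he : RegularEpi e) (hn : JointlyMono n0 n1) {k0 k1 : M ⟶ Y}
    (h : PairFactorsThrough (e ≫ k0) (e ≫ k1) n0 n1) : PairFactorsThrough k0 k1 n0 n1 := by
  rw [pairFactorsThrough_iff_prodLift] at h ⊢
  obtain ⟨u, hu⟩ := h
  have := isRegularEpi_of_regularEpi he
  have := hn.mono_prodLift
  have sq : CommSq u e (prod.lift n0 n1) (prod.lift k0 k1) := ⟨by simp [hu]⟩
  exact ⟨sq.lift, sq.fac_right⟩

end Pairs

lemma JointlyExtremallyEpic.exists_lift [HasPullbacks C] {A B Z N W : C} {a : A ⟶ Z}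
    {b : B ⟶ Z} (h : JointlyExtremallyEpic a b) (m : N ⟶ W) [Mono m] (c : Z ⟶ W)
    (ha : ∃ u, u ≫ m = a ≫ c) (hb : ∃ v, v ≫ m = b ≫ c) : ∃ ψ : Z ⟶ N, ψ ≫ m = c := by
  obtain ⟨u, hu⟩ := ha
  obtain ⟨v, hv⟩ := hb
  have : IsIso (pullback.fst c m) :=
    h _ inferInstance (pullback.lift a u hu.symm) (pullback.lift b v hv.symm)
      (pullback.lift_fst _ _ _) (pullback.lift_fst _ _ _)
  exact ⟨inv (pullback.fst c m) ≫ pullback.snd c m,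
    by rw [Category.assoc, ← pullback.condition, IsIso.inv_hom_id_assoc]⟩

lemma JointlyExtremallyEpic.pairFactorsThrough [HasPullbacks C] [HasBinaryProducts C]
    {A B Z N Y : C} {a : A ⟶ Z} {b : B ⟶ Z} (h : JointlyExtremallyEpic a b)
    {n0 n1 : N ⟶ Y} (hn : JointlyMono n0 n1) {c0 c1 : Z ⟶ Y}
    (ha : PairFactorsThrough (a ≫ c0) (a ≫ c1) n0 n1)
    (hb : PairFactorsThrough (b ≫ c0) (b ≫ c1) n0 n1) :
    PairFactorsThrough c0 c1 n0 n1 := by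
  rw [pairFactorsThrough_iff_prodLift] at ha hb ⊢
  have := hn.mono_prodLift
  exact h.exists_lift _ _ (by simpa using ha) (by simpa using hb)

namespace ReflRel

variable {X : C}

def op (R : ReflRel X) : ReflRel X where
  R := R.R
  d0 := R.d1
  d1 := R.d0
  s0 := R.s0
  jm _ a b h0 h1 := R.jm a b h1 h0
  r0 := R.r1
  r1 := R.r0

lemma Symm.sig_op {Sig : SigClass C} (hfib : Fibrational Sig) {S : ReflRel X} (hsym : S.Symm)
    (hS : Sig S.d0 S.s0) : Sig S.op.d0 S.op.s0 := by
  obtain ⟨σ, hσ0, hσ1⟩ := hsym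
  have hσσ : σ ≫ σ = 𝟙 S.R := S.jm _ _ (by simp [hσ0, hσ1]) (by simp [hσ0, hσ1])
  have : IsIso σ := ⟨σ, hσσ, hσσ⟩
  have hσs0 : S.s0 ≫ σ = 𝟙 X ≫ S.s0 :=
    S.jm _ _ (by simp [hσ0, S.r0, S.r1]) (by simp [hσ1, S.r0, S.r1])
  have hpb : IsPullback σ S.d1 S.d0 (𝟙 X) := .of_horiz_isIso ⟨by simp [hσ0]⟩
  exact hfib.1 S.d0 S.s0 S.d1 S.s0 (𝟙 X) σ hpb S.r0 S.r1 hσs0 hS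

variable [HasPullbacks C] (R S : ReflRel X) {M : C} {e : pullback R.d1 S.d0 ⟶ M} {m0 m1 : M ⟶ X}

lemma left_le_comp (he0 : e ≫ m0 = pullback.fst R.d1 S.d0 ≫ R.d0)
    (he1 : e ≫ m1 = pullback.snd R.d1 S.d0 ≫ S.d1) : PairFactorsThrough R.d0 R.d1 m0 m1 :=
  ⟨pullback.lift (𝟙 R.R) (R.d1 ≫ S.s0) (by simp [S.r0]) ≫ e,
    by simp [he0, pullback.lift_fst_assoc],
    by simp [he1, pullback.lift_snd_assoc, S.r1]⟩

lemma right_le_comp (he0 : e ≫ m0 = pullback.fst R.d1 S.d0 ≫ R.d0)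
    (he1 : e ≫ m1 = pullback.snd R.d1 S.d0 ≫ S.d1) : PairFactorsThrough S.d0 S.d1 m0 m1 :=
  ⟨pullback.lift (S.d0 ≫ R.s0) (𝟙 S.R) (by simp [R.r1]) ≫ e,
    by simp [he0, pullback.lift_fst_assoc, R.r0],
    by simp [he1, pullback.lift_snd_assoc]⟩

lemma comp_le_of_le [HasBinaryProducts C] {Sig : SigClass C} (hmal : SigmaMaltsev Sig)
    {R S : ReflRel X} (hS : Sig S.d0 S.s0) {P : C} {p : P ⟶ R.R} {q : P ⟶ S.R}
    (hpb : IsPullback p q R.d1 S.d0) {N : C} {n0 n1 : N ⟶ X} (hn : JointlyMono n0 n1)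
    (hRN : PairFactorsThrough R.d0 R.d1 n0 n1) (hSN : PairFactorsThrough S.d0 S.d1 n0 n1) :
    PairFactorsThrough (p ≫ R.d0) (q ≫ S.d1) n0 n1 := by
  -- `P` is the pullback of the split epimorphism `(S.d0, S.s0) ∈ Σ` along `(R.d1, R.s0)`,
  -- and the induced sections are the inclusions `R ↪ P` and `S ↪ P`
  have hje : JointlyExtremallyEpic (hpb.lift (𝟙 R.R) (R.d1 ≫ S.s0) (by simp [S.r0]))
      (hpb.lift (S.d0 ≫ R.s0) (𝟙 S.R) (by simp [R.r1])) :=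
    hmal S.d0 S.s0 p _ R.d1 R.s0 q _ S.r0 (hpb.lift_fst _ _ _) R.r1 (hpb.lift_snd _ _ _)
      hpb.flip (hpb.lift_snd _ _ _) (hpb.lift_fst _ _ _) hS
  refine hje.pairFactorsThrough hn ?_ ?_
  · obtain ⟨u, hu0, hu1⟩ := hRN
    exact ⟨u, by simp [hu0], by simp [hu1, S.r1]⟩
  · obtain ⟨v, hv0, hv1⟩ := hSN
    exact ⟨v, by simp [hv0, R.r0], by simp [hv1]⟩

end ReflRel

theorem reflexive_relations_permute_general [HasFiniteLimits C]
    (Sig : SigClass C) (hfib : Fibrational Sig) (hmal : SigmaMaltsev Sig)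
    {X : C} (R S : ReflRel X) (hSsym : S.Symm) (hS : Sig S.d0 S.s0)
    {M M' : C} (e : pullback R.d1 S.d0 ⟶ M) (m0 m1 : M ⟶ X)
    (he : Nonempty (RegularEpi e))
    (hm : ∀ ⦃Z : C⦄ (a b : Z ⟶ M), a ≫ m0 = b ≫ m0 → a ≫ m1 = b ≫ m1 → a = b)
    (he0 : e ≫ m0 = pullback.fst R.d1 S.d0 ≫ R.d0)
    (he1 : e ≫ m1 = pullback.snd R.d1 S.d0 ≫ S.d1)
    (e' : pullback S.d1 R.d0 ⟶ M') (m0' m1' : M' ⟶ X)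
    (he' : Nonempty (RegularEpi e'))
    (hm' : ∀ ⦃Z : C⦄ (a b : Z ⟶ M'), a ≫ m0' = b ≫ m0' → a ≫ m1' = b ≫ m1' → a = b)
    (he0' : e' ≫ m0' = pullback.fst S.d1 R.d0 ≫ S.d0)
    (he1' : e' ≫ m1' = pullback.snd S.d1 R.d0 ≫ R.d1) :
    ∃ φ : M ≅ M', φ.hom ≫ m0' = m0 ∧ φ.hom ≫ m1' = m1 := by
  have hRS : PairFactorsThrough m0 m1 m0' m1' := by
    refine .of_regularEpi_comp he.some hm' ?_
    rw [he0, he1]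
    exact ReflRel.comp_le_of_le hmal hS (.of_hasPullback _ _) hm'
      (ReflRel.right_le_comp S R he0' he1') (ReflRel.left_le_comp S R he0' he1')
  have hSR : PairFactorsThrough m0' m1' m0 m1 := by
    refine (PairFactorsThrough.of_regularEpi_comp he'.some (JointlyMono.swap hm) ?_).swap
    rw [he0', he1']
    exact ReflRel.comp_le_of_le (R := R.op) (S := S.op) hmal (hSsym.sig_op hfib hS)
      (IsPullback.of_hasPullback _ _).flip (JointlyMono.swap hm)
      (ReflRel.left_le_comp R S he0 he1).swap (ReflRel.right_le_comp R S he0 he1).swap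
  exact JointlyMono.exists_iso_of_pairFactorsThrough hm hm' hRS hSR

/-- In a regular `Σ`-Mal'tsev category, a reflexive relation `R` and a symmetric
`Σ`-relation `S` on the same object permute: `R ∘ S = S ∘ R` (the images of the two
composites coincide as subobjects of `X × X`). -/
theorem reflexive_relations_permute [HasFiniteLimits C] (hreg : RegularCat C)
    (Sig : SigClass C) (hfib : Fibrational Sig) (hmal : SigmaMaltsev Sig)
    {X : C} (R S : ReflRel X) (hSsym : S.Symm) (hS : Sig S.d0 S.s0)
    {M M' : C} (e : pullback R.d1 S.d0 ⟶ M) (m0 m1 : M ⟶ X)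
    (he : Nonempty (RegularEpi e))
    (hm : ∀ ⦃Z : C⦄ (a b : Z ⟶ M), a ≫ m0 = b ≫ m0 → a ≫ m1 = b ≫ m1 → a = b)
    (he0 : e ≫ m0 = pullback.fst R.d1 S.d0 ≫ R.d0)
    (he1 : e ≫ m1 = pullback.snd R.d1 S.d0 ≫ S.d1)
    (e' : pullback S.d1 R.d0 ⟶ M') (m0' m1' : M' ⟶ X)
    (he' : Nonempty (RegularEpi e'))
    (hm' : ∀ ⦃Z : C⦄ (a b : Z ⟶ M'), a ≫ m0' = b ≫ m0' → a ≫ m1' = b ≫ m1' → a = b)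
    (he0' : e' ≫ m0' = pullback.fst S.d1 R.d0 ≫ S.d0)
    (he1' : e' ≫ m1' = pullback.snd S.d1 R.d0 ≫ R.d1) :
    ∃ φ : M ≅ M', φ.hom ≫ m0' = m0 ∧ φ.hom ≫ m1' = m1 :=
  reflexive_relations_permute_general Sig hfib hmal R S hSsym hS e m0 m1 he hm he0 he1 e' m0' m1'
    he' hm' he0' he1'
end

section
/- Let E be a Σ-Mal'tsev category, R an equivalence relation and S a Σ-equivalence relation on an object X. If R ∩ S = Δ_X (the diagonal), then R and S centralize each other, i.e. there exists a connector p : R ×_X S → X satisfying the Mal'tsev identities p(x R x S y) = y and p(x R y S y) = x. -/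
open CategoryTheory CategoryTheory.Limits

universe v u

variable {C : Type u} [Category.{v} C]

/-! Write `P = R ×_X S` for the triples `x R y S z` and `Q = S ×_X R` for the triples `x S w R z`.
Since `R ∩ S = Δ_X`, the middle element `w` is determined by `(x, z)`, i.e. `Q → X × X` is a
monomorphism. The two sections `R → P`, `S → P` factor through its pullback `P ×_{X×X} Q → P`,
and they are jointly extremally epic by the `Σ`-Mal'tsev condition applied to the split
epimorphism `(d₀, s₀)` of `S`. Hence `P ≅ P ×_{X×X} Q`, and the connector is
`p(x R y S z) = w`. -/

attribute [local simp] pullback.lift_fst pullback.lift_snd pullback.lift_fst_assoc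
  pullback.lift_snd_assoc prod.lift_fst prod.lift_snd

variable {X : C}

namespace ReflRel

variable {Z : C}

def Rel (R : ReflRel X) (x y : Z ⟶ X) : Prop :=
  ∃ r : Z ⟶ R.R, r ≫ R.d0 = x ∧ r ≫ R.d1 = y

lemma Rel.symm {R : ReflRel X} (hR : R.Symm) {x y : Z ⟶ X} (h : R.Rel x y) : R.Rel y x := by
  obtain ⟨σ, hσ0, hσ1⟩ := hR
  obtain ⟨r, rfl, rfl⟩ := h
  exact ⟨r ≫ σ, by simp [hσ0], by simp [hσ1]⟩

lemma Rel.trans [HasPullbacks C] {R : ReflRel X} (hR : R.Trans) {x y z : Z ⟶ X}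
    (hxy : R.Rel x y) (hyz : R.Rel y z) : R.Rel x z := by
  obtain ⟨t, ht0, ht1⟩ := hR
  obtain ⟨r, rfl, hr1⟩ := hxy
  obtain ⟨r', hr'0, rfl⟩ := hyz
  exact ⟨pullback.lift r r' (hr1.trans hr'0.symm) ≫ t, by simp [ht0], by simp [ht1]⟩

variable [HasPullbacks C]

/-- `(x R y, y S y) ↦ x R y S y`. -/
noncomputable def inlPair (R S : ReflRel X) : R.R ⟶ pullback R.d1 S.d0 :=
  pullback.lift (𝟙 R.R) (R.d1 ≫ S.s0) (by simp [S.r0])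

/-- `(x R x, x S y) ↦ x R x S y`. -/
noncomputable def inrPair (R S : ReflRel X) : S.R ⟶ pullback R.d1 S.d0 :=
  pullback.lift (S.d0 ≫ R.s0) (𝟙 S.R) (by simp [R.r1])

/-- `x R y S z ↦ (x, z)`. -/
noncomputable def outerPair [HasBinaryProducts C] (R S : ReflRel X) :
    pullback R.d1 S.d0 ⟶ X ⨯ X :=
  prod.lift (pullback.fst R.d1 S.d0 ≫ R.d0) (pullback.snd R.d1 S.d0 ≫ S.d1)

@[simp]
lemma inlPair_fst (R S : ReflRel X) : inlPair R S ≫ pullback.fst R.d1 S.d0 = 𝟙 R.R :=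
  pullback.lift_fst _ _ _

@[simp]
lemma inrPair_snd (R S : ReflRel X) : inrPair R S ≫ pullback.snd R.d1 S.d0 = 𝟙 S.R :=
  pullback.lift_snd _ _ _

lemma inlPair_outerPair [HasBinaryProducts C] (R S : ReflRel X) :
    inlPair R S ≫ outerPair R S = prod.lift R.d0 R.d1 := by
  ext <;> simp [inlPair, outerPair, S.r1]

lemma inrPair_outerPair [HasBinaryProducts C] (R S : ReflRel X) :
    inrPair R S ≫ outerPair R S = prod.lift S.d0 S.d1 := by
  ext <;> simp [inrPair, outerPair, R.r0]

lemma isConnector_iff (R S : ReflRel X) (p : pullback R.d1 S.d0 ⟶ X) :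
    IsConnector R S p ↔ inrPair R S ≫ p = S.d1 ∧ inlPair R S ≫ p = R.d0 :=
  Iff.rfl

end ReflRel

open ReflRel

lemma jointlyExtremallyEpic_inlPair_inrPair [HasPullbacks C] {Sig : SigClass C}
    (hmal : SigmaMaltsev Sig) (R S : ReflRel X) (hSs : Sig S.d0 S.s0) :
    JointlyExtremallyEpic (inlPair R S) (inrPair R S) :=
  hmal S.d0 S.s0 (pullback.fst R.d1 S.d0) (inlPair R S) R.d1 R.s0 (pullback.snd R.d1 S.d0)
    (inrPair R S) S.r0 (inlPair_fst R S) R.r1 (inrPair_snd R S)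
    (IsPullback.of_hasPullback R.d1 S.d0).flip (by simp [inlPair]) (by simp [inrPair]) hSs

lemma mono_outerPair_of_inter_diagonal [HasPullbacks C] [HasBinaryProducts C] {R S : ReflRel X}
    (hR : R.IsEquiv) (hS : S.IsEquiv)
    (hcap : ∀ ⦃Z : C⦄ (a : Z ⟶ R.R) (b : Z ⟶ S.R),
      a ≫ R.d0 = b ≫ S.d0 → a ≫ R.d1 = b ≫ S.d1 → a ≫ R.d0 = a ≫ R.d1) :
    Mono (outerPair S R) := by
  refine ⟨fun {Z} a b hab => ?_⟩
  have hx : (a ≫ pullback.fst _ _) ≫ S.d0 = (b ≫ pullback.fst _ _) ≫ S.d0 := by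
    simpa [outerPair] using hab =≫ prod.fst
  have hz : (a ≫ pullback.snd _ _) ≫ R.d1 = (b ≫ pullback.snd _ _) ≫ R.d1 := by
    simpa [outerPair] using hab =≫ prod.snd
  have hmid (c : Z ⟶ pullback S.d1 R.d0) :
      (c ≫ pullback.fst _ _) ≫ S.d1 = (c ≫ pullback.snd _ _) ≫ R.d0 := by
    simp [pullback.condition]
  have hS_mid : S.Rel ((a ≫ pullback.fst _ _) ≫ S.d1) ((b ≫ pullback.fst _ _) ≫ S.d1) :=
    (Rel.symm hS.1 ⟨_, rfl, rfl⟩).trans hS.2 ⟨_, hx.symm, rfl⟩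
  have hR_mid : R.Rel ((a ≫ pullback.snd _ _) ≫ R.d0) ((b ≫ pullback.snd _ _) ≫ R.d0) :=
    Rel.trans hR.2 ⟨_, rfl, hz⟩ (Rel.symm hR.1 ⟨_, rfl, rfl⟩)
  obtain ⟨r, hr0, hr1⟩ := hR_mid
  obtain ⟨s, hs0, hs1⟩ := hS_mid
  have hyy' : (a ≫ pullback.snd _ _) ≫ R.d0 = (b ≫ pullback.snd _ _) ≫ R.d0 := by
    rw [← hr0, ← hr1]
    exact hcap r s (by rw [hr0, hs0, hmid]) (by rw [hr1, hs1, hmid])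
  have hfst : a ≫ pullback.fst _ _ = b ≫ pullback.fst _ _ :=
    S.jm _ _ hx (by rw [hmid, hmid, hyy'])
  have hsnd : a ≫ pullback.snd _ _ = b ≫ pullback.snd _ _ := R.jm _ _ hyy' hz
  exact pullback.hom_ext hfst hsnd

lemma centralize_of_mono_outerPair [HasPullbacks C] [HasBinaryProducts C] (R S : ReflRel X)
    (hJEE : JointlyExtremallyEpic (inlPair R S) (inrPair R S)) [Mono (outerPair S R)] :
    Centralize R S := by
  have hinl : inlPair R S ≫ outerPair R S = inrPair S R ≫ outerPair S R := by
    rw [inlPair_outerPair, inrPair_outerPair]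
  have hinr : inrPair R S ≫ outerPair R S = inlPair S R ≫ outerPair S R := by
    rw [inrPair_outerPair, inlPair_outerPair]
  let m := pullback.fst (outerPair R S) (outerPair S R)
  have : IsIso m :=
    hJEE m inferInstance _ _ (pullback.lift_fst _ _ hinl) (pullback.lift_fst _ _ hinr)
  refine ⟨inv m ≫ pullback.snd _ _ ≫ pullback.fst S.d1 R.d0 ≫ S.d1, ?_⟩
  rw [isConnector_iff, ← pullback.lift_fst _ _ hinl, ← pullback.lift_fst _ _ hinr]
  simp only [m, Category.assoc, IsIso.hom_inv_id_assoc, pullback.lift_snd_assoc]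
  constructor
  · simp [inlPair]
  · simp [inrPair, S.r1]

theorem centralize_of_inter_diagonal_general [HasFiniteLimits C] (Sig : SigClass C)
    (hmal : SigmaMaltsev Sig)
    {X : C} (R S : ReflRel X) (hR : R.IsEquiv) (hS : S.IsEquiv) (hSs : Sig S.d0 S.s0)
    (hcap : ∀ ⦃Z : C⦄ (a : Z ⟶ R.R) (b : Z ⟶ S.R),
      a ≫ R.d0 = b ≫ S.d0 → a ≫ R.d1 = b ≫ S.d1 → a ≫ R.d0 = a ≫ R.d1) :
    Centralize R S :=
  have := mono_outerPair_of_inter_diagonal hR hS hcap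
  centralize_of_mono_outerPair R S (jointlyExtremallyEpic_inlPair_inrPair hmal R S hSs)

/-- In a `Σ`-Mal'tsev category, an equivalence relation `R` and a `Σ`-equivalence
relation `S` centralize each other as soon as `R ∩ S = Δ_X`. -/
theorem centralize_of_inter_diagonal [HasFiniteLimits C] (Sig : SigClass C)
    (hfib : Fibrational Sig) (hmal : SigmaMaltsev Sig)
    {X : C} (R S : ReflRel X) (hR : R.IsEquiv) (hS : S.IsEquiv) (hSs : Sig S.d0 S.s0)
    (hcap : ∀ ⦃Z : C⦄ (a : Z ⟶ R.R) (b : Z ⟶ S.R),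
      a ≫ R.d0 = b ≫ S.d0 → a ≫ R.d1 = b ≫ S.d1 → a ≫ R.d0 = a ≫ R.d1) :
    Centralize R S :=
  centralize_of_inter_diagonal_general Sig hmal R S hR hS hSs hcap
end

section
/- Let E be a point-congruous Σ-Mal'tsev category. If g ∘ f and g are Σ-special morphisms, then f is Σ-special. -/
open CategoryTheory CategoryTheory.Limits

universe v u

variable {C : Type u} [Category.{v} C]

/-- The category of points (split epimorphisms with chosen splitting) of `C`. -/
structure Pt (C : Type u) [Category.{v} C] where
  dom : C
  cod : C
  p : dom ⟶ cod
  s : cod ⟶ dom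
  sp : s ≫ p = 𝟙 cod

@[ext]
structure PtHom (a b : Pt C) where
  dh : a.dom ⟶ b.dom
  ch : a.cod ⟶ b.cod
  wp : dh ≫ b.p = a.p ≫ ch
  ws : a.s ≫ dh = ch ≫ b.s

instance : Category (Pt C) where
  Hom a b := PtHom a b
  id a := ⟨𝟙 a.dom, 𝟙 a.cod, by simp, by simp⟩
  comp u v := ⟨u.dh ≫ v.dh, u.ch ≫ v.ch,
    by rw [Category.assoc, v.wp, ← Category.assoc, u.wp, Category.assoc],
    by rw [← Category.assoc, u.ws, Category.assoc, v.ws, ← Category.assoc]⟩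
  id_comp u := by apply PtHom.ext <;> simp [CategoryStruct.comp, CategoryStruct.id]
  comp_id u := by apply PtHom.ext <;> simp [CategoryStruct.comp, CategoryStruct.id]
  assoc u v w := by apply PtHom.ext <;> simp [CategoryStruct.comp]

/-- The class `Σ` is point-congruous: the full subcategory `Σ(C)` of `Pt(C)` is stable
under finite limits. -/
def PointCongruous (Sig : SigClass C) : Prop :=
  ∀ (J : Type) (_ : SmallCategory J) (_ : FinCategory J) (F : J ⥤ Pt C),
    (∀ j : J, Sig (F.obj j).p (F.obj j).s) →
    ∀ (c : Cone F), IsLimit c → Sig c.pt.p c.pt.s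
/-- A morphism is `Σ`-special when its kernel relation is a `Σ`-relation. -/
def SigSpecial [HasPullbacks C] (Sig : SigClass C) {A B : C} (f : A ⟶ B) : Prop :=
  Sig (kerRel f).d0 (kerRel f).s0

/-!
The kernel pair `R[f]`, as a point over `X`, is the pullback in `Pt C` of the comparison
`R[f ≫ g] ⟶ R[g]` along the diagonal `(1_Y, 1_Y) ⟶ R[g]`: on domains this is the classical
pullback of `R[f ≫ g] ⟶ R[g]` along `Δ : Y ⟶ R[g]`, on codomains a square with identity sides.
The identity point lies in `Σ` because `Σ` contains the isomorphisms, so point-congruity puts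
`R[f]` in `Σ`.
-/

namespace Pt

@[simp] lemma comp_dh {a b c : Pt C} (u : a ⟶ b) (v : b ⟶ c) : (u ≫ v).dh = u.dh ≫ v.dh := rfl

@[simp] lemma comp_ch {a b c : Pt C} (u : a ⟶ b) (v : b ⟶ c) : (u ≫ v).ch = u.ch ≫ v.ch := rfl

lemma isPullback_of_components {P A B D : Pt C} {fst : P ⟶ A} {snd : P ⟶ B} {f : A ⟶ D}
    {g : B ⟶ D} (hdom : IsPullback fst.dh snd.dh f.dh g.dh)
    (hcod : IsPullback fst.ch snd.ch f.ch g.ch) : IsPullback fst snd f g := by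
  have comm : fst ≫ f = snd ≫ g := PtHom.ext hdom.w hcod.w
  refine ⟨⟨comm⟩, ⟨PullbackCone.IsLimit.mk comm (fun s => ?lift) ?_ ?_ ?_⟩⟩
  case lift =>
    have hd : s.fst.dh ≫ f.dh = s.snd.dh ≫ g.dh := congrArg PtHom.dh s.condition
    have hc : s.fst.ch ≫ f.ch = s.snd.ch ≫ g.ch := congrArg PtHom.ch s.condition
    refine ⟨hdom.lift _ _ hd, hcod.lift _ _ hc, ?_, ?_⟩
    · apply hcod.hom_ext
      · simp only [Category.assoc, ← fst.wp, hdom.lift_fst_assoc, s.fst.wp, hcod.lift_fst]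
      · simp only [Category.assoc, ← snd.wp, hdom.lift_snd_assoc, s.snd.wp, hcod.lift_snd]
    · apply hdom.hom_ext
      · simp only [Category.assoc, hdom.lift_fst, s.fst.ws, hcod.lift_fst_assoc, fst.ws]
      · simp only [Category.assoc, hdom.lift_snd, s.snd.ws, hcod.lift_snd_assoc, snd.ws]
  · intro s
    exact PtHom.ext (hdom.lift_fst _ _ _) (hcod.lift_fst _ _ _)
  · intro s
    exact PtHom.ext (hdom.lift_snd _ _ _) (hcod.lift_snd _ _ _)
  · intro s m hm₁ hm₂
    exact PtHom.ext
      (hdom.hom_ext (by simpa using congrArg PtHom.dh hm₁) (by simpa using congrArg PtHom.dh hm₂))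
      (hcod.hom_ext (by simpa using congrArg PtHom.ch hm₁) (by simpa using congrArg PtHom.ch hm₂))

abbrev identity (A : C) : Pt C := ⟨A, A, 𝟙 A, 𝟙 A, Category.comp_id _⟩

@[simps]
def toIdentity (P : Pt C) {B : C} (h : P.cod ⟶ B) : P ⟶ identity B where
  dh := P.p ≫ h
  ch := h
  wp := Category.comp_id _
  ws := by simp [reassoc_of% P.sp]

@[simps]
def fromIdentity (P : Pt C) : identity P.cod ⟶ P where
  dh := P.s
  ch := 𝟙 P.cod
  wp := P.sp.trans (Category.comp_id _).symm
  ws := rfl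

variable [HasPullbacks C]

noncomputable abbrev kernelPair {A B : C} (f : A ⟶ B) : Pt C :=
  ⟨pullback f f, A, pullback.fst f f, pullback.diagonal f, pullback.diagonal_fst f⟩

@[simps]
noncomputable def kernelPairMap {A B A' B' : C} {f : A ⟶ B} {f' : A' ⟶ B'} (a : A ⟶ A')
    (b : B ⟶ B') (w : f ≫ b = a ≫ f') : kernelPair f ⟶ kernelPair f' where
  dh := pullback.map f f f' f' a a b w w
  ch := a
  wp := pullback.lift_fst _ _ _
  ws := by apply pullback.hom_ext <;> simp [pullback.lift_fst, pullback.lift_snd]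

lemma isPullback_kernelPair_comp {X Y Z : C} (f : X ⟶ Y) (g : Y ⟶ Z) :
    IsPullback (toIdentity (kernelPair f) f)
      (kernelPairMap (𝟙 X) g (Category.id_comp _).symm)
      (fromIdentity (kernelPair g))
      (kernelPairMap f (𝟙 Z) (Category.comp_id _)) :=
  isPullback_of_components (pullback_map_diagonal_isPullback f f g) IsPullback.of_id_snd

end Pt

lemma PointCongruous.sig_of_isPullback {Sig : SigClass C} (hpc : PointCongruous Sig)
    {P A B D : Pt C} {fst : P ⟶ A} {snd : P ⟶ B} {f : A ⟶ D} {g : B ⟶ D}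
    (h : IsPullback fst snd f g) (hA : Sig A.p A.s) (hB : Sig B.p B.s) (hD : Sig D.p D.s) :
    Sig P.p P.s :=
  hpc WalkingCospan inferInstance inferInstance (cospan f g)
    (by rintro (_ | _ | _) <;> assumption) h.cone h.isLimit

lemma sigSpecial_iff [HasPullbacks C] (Sig : SigClass C) {A B : C} (f : A ⟶ B) :
    SigSpecial Sig f ↔ Sig (Pt.kernelPair f).p (Pt.kernelPair f).s :=
  Iff.rfl

theorem sigSpecial_of_comp_general [HasFiniteLimits C] (Sig : SigClass C)
    (hfib : Fibrational Sig) (hpc : PointCongruous Sig)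
    {X Y Z : C} (f : X ⟶ Y) (g : Y ⟶ Z)
    (hgf : SigSpecial Sig (f ≫ g)) (hg : SigSpecial Sig g) :
    SigSpecial Sig f :=
  (sigSpecial_iff Sig f).2 <| hpc.sig_of_isPullback (Pt.isPullback_kernelPair_comp f g)
    (hfib.2 (𝟙 Y) (𝟙 Y) inferInstance (Category.comp_id _)) hgf hg

/-- In a point-congruous `Σ`-Mal'tsev category, if `f ≫ g` and `g` are `Σ`-special,
then so is `f`. -/
theorem sigSpecial_of_comp [HasFiniteLimits C] (Sig : SigClass C)
    (hfib : Fibrational Sig) (hpc : PointCongruous Sig) (hmal : SigmaMaltsev Sig)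
    {X Y Z : C} (f : X ⟶ Y) (g : Y ⟶ Z)
    (hgf : SigSpecial Sig (f ≫ g)) (hg : SigSpecial Sig g) :
    SigSpecial Sig f :=
  sigSpecial_of_comp_general Sig hfib hpc f g hgf hg
end

section
/- Let E be a regular Σ-Mal'tsev category. Then any regular epimorphism in Pt(E) whose domain split epimorphism (f,s) belongs to Σ is a regular pushout: the induced comparison map X → Y ×_{Y'} X' to the pullback is a regular epimorphism. -/
open CategoryTheory CategoryTheory.Limits

universe v u

variable {C : Type u} [Category.{v} C]

/-! Factor the comparison `φ : X ⟶ Y ×_{Y'} X'` as `p ≫ i` with `i` a monomorphism. Pulling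
`(f, s)` back along the second projection of the kernel pair of `y` (split by the diagonal), the
`Σ`-Mal'tsev condition makes the two induced sections of the pullback `Q` jointly extremally
epic. The evident map `Q ⟶ Y ×_{Y'} X'` is a pullback of `x`, hence a regular epimorphism, and
both sections composed with it factor through `i`; so it factors through `i`, forcing `i` to be
an isomorphism. Thus `φ` is an extremal epimorphism, which in a regular category is regular. -/

namespace RegularCat

variable [HasFiniteLimits C]

theorem hasCoequalizer_of_isKernelPair (hreg : RegularCat C) {X Y Z : C} {f : X ⟶ Y}
    {g₁ g₂ : Z ⟶ X} (k : IsKernelPair f g₁ g₂) : HasCoequalizer g₁ g₂ :=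
  haveI := hreg.1 f
  hasColimit_of_iso (F := parallelPair (pullback.fst f f) (pullback.snd f f))
    (parallelPair.ext k.isoPullback (Iso.refl X)
      (by simp [k.isoPullback_hom_fst]) (by simp [k.isoPullback_hom_snd]))

theorem regular (hreg : RegularCat C) : Regular C where
  hasCoequalizer_of_isKernelPair := hreg.hasCoequalizer_of_isKernelPair
  regularEpiIsStableUnderBaseChange :=
    ⟨fun {_ _ _ _ f g f' g'} sq ⟨⟨hg⟩⟩ => ⟨hreg.2 g f g' f' sq ⟨hg⟩⟩⟩

end RegularCat

theorem JointlyExtremallyEpic.exists_lift_of_mono_s18 [HasPullbacks C] {A B Z P M : C}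
    {a : A ⟶ Z} {b : B ⟶ Z} (h : JointlyExtremallyEpic a b) (r : Z ⟶ P) (i : M ⟶ P) [Mono i]
    (ha : ∃ a' : A ⟶ M, a' ≫ i = a ≫ r) (hb : ∃ b' : B ⟶ M, b' ≫ i = b ≫ r) :
    ∃ q : Z ⟶ M, q ≫ i = r := by
  obtain ⟨a', ha'⟩ := ha
  obtain ⟨b', hb'⟩ := hb
  have := h (pullback.fst r i) inferInstance (pullback.lift a a' ha'.symm)
    (pullback.lift b b' hb'.symm) (pullback.lift_fst _ _ _) (pullback.lift_fst _ _ _)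
  exact ⟨inv (pullback.fst r i) ≫ pullback.snd r i, by simp [← pullback.condition]⟩

attribute [local simp] pullback.lift_fst pullback.lift_snd pullback.lift_fst_assoc
  pullback.lift_snd_assoc

theorem SigmaMaltsev.jointlyExtremallyEpic_pullback [HasPullbacks C] {Sig : SigClass C}
    (hmal : SigmaMaltsev Sig) {X Y Y' : C} {f : X ⟶ Y} {s : Y ⟶ X} {g : Y' ⟶ Y} {t : Y ⟶ Y'}
    (hfs : s ≫ f = 𝟙 Y) (hgt : t ≫ g = 𝟙 Y) (hSig : Sig f s) :
    JointlyExtremallyEpic (pullback.lift (g ≫ s) (𝟙 Y') (by simp [hfs]) : Y' ⟶ pullback f g)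
      (pullback.lift (𝟙 X) (f ≫ t) (by simp [hgt])) :=
  hmal f s (pullback.snd f g) _ g t (pullback.fst f g) _ hfs (by simp) hgt (by simp)
    (.of_hasPullback f g) (by simp) (by simp) hSig

section KernelPairComparison

variable [HasPullbacks C] {X Y X' Y' : C} {f : X ⟶ Y} {f' : X' ⟶ Y'} {x : X ⟶ X'} {y : Y ⟶ Y'}

/-- In elements: `(x₀, (y₁, y₂)) ↦ (y₁, x x₀)`, where `f x₀ = y₂` and `y y₁ = y y₂`. -/
noncomputable def kernelPairComparison (hcomm : f ≫ y = x ≫ f') :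
    pullback f (pullback.snd y y) ⟶ pullback y f' :=
  pullback.lift (pullback.snd _ _ ≫ pullback.fst y y) (pullback.fst _ _ ≫ x) (by
    rw [Category.assoc, pullback.condition, ← Category.assoc, ← pullback.condition,
      Category.assoc, hcomm, Category.assoc])

theorem isPullback_kernelPairComparison (hcomm : f ≫ y = x ≫ f') :
    IsPullback (kernelPairComparison hcomm) (pullback.fst f (pullback.snd y y))
      (pullback.snd y f') x := by
  refine .of_right ?_ (pullback.lift_snd _ _ _) (.of_hasPullback y f')
  rw [kernelPairComparison, pullback.lift_fst, ← hcomm]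
  exact (IsPullback.of_hasPullback f _).flip.paste_horiz (.of_hasPullback y y)

theorem liftId_comp_kernelPairComparison (hcomm : f ≫ y = x ≫ f') :
    pullback.lift (𝟙 X) (f ≫ pullback.diagonal y) (by simp) ≫
      kernelPairComparison hcomm = pullback.lift f x hcomm := by
  apply pullback.hom_ext <;> simp [kernelPairComparison]

theorem liftSection_comp_kernelPairComparison {s : Y ⟶ X} {s' : Y' ⟶ X'}
    (hfs : s ≫ f = 𝟙 Y) (hcomm : f ≫ y = x ≫ f') (hscomm : s ≫ x = y ≫ s') :
    pullback.lift (pullback.snd y y ≫ s) (𝟙 _) (by simp [hfs]) ≫ kernelPairComparison hcomm =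
      pullback.fst y y ≫ s ≫ pullback.lift f x hcomm := by
  apply pullback.hom_ext
  · simp [kernelPairComparison, hfs]
  · simp [kernelPairComparison, hscomm, pullback.condition_assoc]

end KernelPairComparison

theorem regular_pushout_general [HasFiniteLimits C] (hreg : RegularCat C) (Sig : SigClass C)
    (hmal : SigmaMaltsev Sig)
    {X Y X' Y' : C} (f : X ⟶ Y) (s : Y ⟶ X) (f' : X' ⟶ Y') (s' : Y' ⟶ X')
    (x : X ⟶ X') (y : Y ⟶ Y')
    (hfs : s ≫ f = 𝟙 Y)
    (hx : Nonempty (RegularEpi x))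
    (hcomm : f ≫ y = x ≫ f') (hscomm : s ≫ x = y ≫ s')
    (hSig : Sig f s) :
    Nonempty (RegularEpi (pullback.lift f x hcomm : X ⟶ pullback y f')) := by
  have := hreg.regular
  have hjee := hmal.jointlyExtremallyEpic_pullback hfs (pullback.diagonal_snd y) hSig
  have : IsRegularEpi (kernelPairComparison hcomm) :=
    Regular.regularEpiIsStableUnderBaseChange.of_isPullback
      (isPullback_kernelPairComparison hcomm).flip ⟨hx⟩
  have : ExtremalEpi (pullback.lift f x hcomm) := by
    refine ExtremalEpi.mk_of_hasEqualizers _ fun Z p i hpi _ => ?_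
    obtain ⟨q, hq⟩ := hjee.exists_lift_of_mono_s18 (kernelPairComparison hcomm) i
      ⟨pullback.fst y y ≫ s ≫ p, by
        rw [liftSection_comp_kernelPairComparison hfs hcomm hscomm, ← hpi,
          Category.assoc, Category.assoc]⟩
      ⟨p, by rw [liftId_comp_kernelPairComparison, hpi]⟩
    exact ExtremalEpi.isIso _ q i hq
  exact ⟨Regular.regularEpiOfExtremalEpi _⟩

/-- In a regular `Σ`-Mal'tsev category, any (levelwise regular epimorphic) morphism of
points whose domain split epimorphism `(f,s)` is in `Σ` is a regular pushout: the
comparison map to the pullback is a regular epimorphism. -/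
theorem regular_pushout [HasFiniteLimits C] (hreg : RegularCat C) (Sig : SigClass C)
    (hfib : Fibrational Sig) (hmal : SigmaMaltsev Sig)
    {X Y X' Y' : C} (f : X ⟶ Y) (s : Y ⟶ X) (f' : X' ⟶ Y') (s' : Y' ⟶ X')
    (x : X ⟶ X') (y : Y ⟶ Y')
    (hfs : s ≫ f = 𝟙 Y) (hfs' : s' ≫ f' = 𝟙 Y')
    (hx : Nonempty (RegularEpi x)) (hy : Nonempty (RegularEpi y))
    (hcomm : f ≫ y = x ≫ f') (hscomm : s ≫ x = y ≫ s')
    (hSig : Sig f s) :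
    Nonempty (RegularEpi (pullback.lift f x hcomm : X ⟶ pullback y f')) :=
  regular_pushout_general hreg Sig hmal f s f' s' x y hfs hx hcomm hscomm hSig
end

section
/- Let E be a category endowed with a fibrational class Σ of split epimorphisms. If E is Σ-protomodular (every split epimorphism in Σ is strongly split), then E is a Σ-Mal'tsev category; and in a Σ-protomodular category a monomorphism is normal to at most one Σ-equivalence relation. -/
open CategoryTheory CategoryTheory.Limits

universe v u

variable {C : Type u} [Category.{v} C]

/-- `(f,s)` is a strongly split epimorphism: for every pullback of `(f,s)`, the pair
consisting of the projection and the section `s` is jointly extremally epic. -/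
def StronglySplit {X Y : C} (f : X ⟶ Y) (s : Y ⟶ X) : Prop :=
  ∀ ⦃X' Y' : C⦄ (x : X' ⟶ X) (y : Y' ⟶ Y) (f' : X' ⟶ Y') (s' : Y' ⟶ X'),
    IsPullback x f' f y → s' ≫ f' = 𝟙 Y' → s' ≫ x = y ≫ s →
    JointlyExtremallyEpic x s

/-- `C` is `Σ`-protomodular: every split epimorphism in `Σ` is strongly split. -/
def SigmaProtomodular (Sig : SigClass C) : Prop :=
  ∀ ⦃X Y : C⦄ (f : X ⟶ Y) (s : Y ⟶ X), s ≫ f = 𝟙 Y → Sig f s → StronglySplit f s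

/-- `m` is normal to the equivalence relation `S`. -/
def NormalTo [HasFiniteLimits C] {U X : C} (m : U ⟶ X) (S : ReflRel X) : Prop :=
  ∃ mt : (U ⨯ U : C) ⟶ S.R,
    IsPullback mt (prod.fst : (U ⨯ U : C) ⟶ U) S.d0 m ∧
    IsPullback mt (prod.snd : (U ⨯ U : C) ⟶ U) S.d1 m

/-!
Both statements come from applying strong splitness to a well-chosen pullback. For the
Mal'tsev property, the pullback of `(f', s')` along the section `t` is `(f, s)` itself, with
projection `tbar`, so `(tbar, s')` is jointly extremally epic. For normality, `m` normal to `S`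
exhibits `U × U` as the pullback of `(d₀, s₀)` along `m`; hence the intersection `S ∩ S'`, a
subobject of `S` containing both `U × U` and the reflexivity `s₀`, is all of `S`, i.e.
`S ≤ S'`, and by symmetry `S = S'`.
-/

theorem JointlyExtremallyEpic.symm {A B Z : C} {a : A ⟶ Z} {b : B ⟶ Z}
    (h : JointlyExtremallyEpic a b) : JointlyExtremallyEpic b a :=
  fun _ m hm b' a' hb ha => h m hm a' b' ha hb

section SplitPullback

variable {X Y X' Y' : C} {f : X ⟶ Y} {f' : X' ⟶ Y'} {g : Y' ⟶ Y} {gbar : X' ⟶ X}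
  {t : Y ⟶ Y'} {tbar : X ⟶ X'}

theorem CategoryTheory.IsPullback.section_comp_eq (hpb : IsPullback gbar f' f g)
    {s : Y ⟶ X} {s' : Y' ⟶ X'} (hs : s ≫ f = 𝟙 Y) (hs' : s' ≫ f' = 𝟙 Y') (ht : t ≫ g = 𝟙 Y)
    (htbar : tbar ≫ gbar = 𝟙 X) (hs'g : s' ≫ gbar = g ≫ s) (htf : tbar ≫ f' = f ≫ t) :
    s ≫ tbar = t ≫ s' := by
  apply hpb.hom_ext
  · simp only [Category.assoc, htbar, hs'g, reassoc_of% ht, Category.comp_id]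
  · simp only [Category.assoc, htf, hs', reassoc_of% hs, Category.comp_id]

theorem CategoryTheory.IsPullback.of_section (hpb : IsPullback gbar f' f g) (ht : t ≫ g = 𝟙 Y)
    (htbar : tbar ≫ gbar = 𝟙 X) (htf : tbar ≫ f' = f ≫ t) : IsPullback tbar f f' t := by
  have hid : IsPullback (tbar ≫ gbar) f f (t ≫ g) := by
    rw [htbar, ht]
    exact IsPullback.of_id_fst
  exact IsPullback.of_right hid htf hpb

end SplitPullback

theorem sigmaMaltsev_of_sigmaProtomodular {Sig : SigClass C} (hfib : Fibrational Sig)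
    (hpm : SigmaProtomodular Sig) : SigmaMaltsev Sig := by
  intro X Y X' Y' f s f' s' g t gbar tbar hs hs' ht htbar hpb hs'g htf hSig
  have hSig' : Sig f' s' := hfib.1 f s f' s' g gbar hpb hs hs' hs'g hSig
  exact (hpm f' s' hs' hSig' tbar t f s (hpb.of_section ht htbar htf) hs
    (hpb.section_comp_eq hs hs' ht htbar hs'g htf)).symm

namespace ReflRel

variable {X : C}

instance : LE (ReflRel X) :=
  ⟨fun S S' => ∃ h : S.R ⟶ S'.R, h ≫ S'.d0 = S.d0 ∧ h ≫ S'.d1 = S.d1⟩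

theorem exists_iso_of_le_of_le {S S' : ReflRel X} (h : S ≤ S') (h' : S' ≤ S) :
    ∃ φ : S.R ≅ S'.R, φ.hom ≫ S'.d0 = S.d0 ∧ φ.hom ≫ S'.d1 = S.d1 := by
  obtain ⟨i, hi0, hi1⟩ := h
  obtain ⟨j, hj0, hj1⟩ := h'
  refine ⟨⟨i, j, ?_, ?_⟩, hi0, hi1⟩
  · exact S.jm _ _ (by simp [hi0, hj0]) (by simp [hi1, hj1])
  · exact S'.jm _ _ (by simp [hi0, hj0]) (by simp [hi1, hj1])

section Intersection

variable [HasBinaryProducts C]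

noncomputable def toProd (S : ReflRel X) : S.R ⟶ X ⨯ X := prod.lift S.d0 S.d1

@[simp]
theorem toProd_fst (S : ReflRel X) : S.toProd ≫ prod.fst = S.d0 := prod.lift_fst _ _

@[simp]
theorem toProd_snd (S : ReflRel X) : S.toProd ≫ prod.snd = S.d1 := prod.lift_snd _ _

theorem comp_toProd_eq_iff {S S' : ReflRel X} {A : C} {a : A ⟶ S.R} {a' : A ⟶ S'.R} :
    a ≫ S.toProd = a' ≫ S'.toProd ↔ a ≫ S.d0 = a' ≫ S'.d0 ∧ a ≫ S.d1 = a' ≫ S'.d1 := by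
  refine ⟨fun h => ⟨?_, ?_⟩, fun ⟨h0, h1⟩ => prod.hom_ext ?_ ?_⟩
  · simpa using h =≫ prod.fst
  · simpa using h =≫ prod.snd
  · simpa using h0
  · simpa using h1

instance (S : ReflRel X) : Mono S.toProd :=
  ⟨fun a b h => S.jm a b (comp_toProd_eq_iff.1 h).1 (comp_toProd_eq_iff.1 h).2⟩

theorem le_of_jointlyExtremallyEpic [HasPullbacks C] {S S' : ReflRel X} {A : C}
    {a : A ⟶ S.R} {a' : A ⟶ S'.R} (ha : JointlyExtremallyEpic a S.s0)
    (h0 : a ≫ S.d0 = a' ≫ S'.d0) (h1 : a ≫ S.d1 = a' ≫ S'.d1) : S ≤ S' := by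
  -- `pullback.fst` is the inclusion of the intersection `S ∩ S'` into `S`.
  have hcond := comp_toProd_eq_iff.1 (pullback.condition (f := S.toProd) (g := S'.toProd))
  have : IsIso (pullback.fst S.toProd S'.toProd) :=
    ha _ inferInstance (pullback.lift a a' (comp_toProd_eq_iff.2 ⟨h0, h1⟩))
      (pullback.lift S.s0 S'.s0
        (comp_toProd_eq_iff.2 ⟨by simp [S.r0, S'.r0], by simp [S.r1, S'.r1]⟩))
      (pullback.lift_fst _ _ _) (pullback.lift_fst _ _ _)
  exact ⟨inv (pullback.fst S.toProd S'.toProd) ≫ pullback.snd S.toProd S'.toProd,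
    by rw [Category.assoc, ← hcond.1, IsIso.inv_hom_id_assoc],
    by rw [Category.assoc, ← hcond.2, IsIso.inv_hom_id_assoc]⟩

end Intersection

end ReflRel

section Normal

variable [HasFiniteLimits C] {U X : C} {m : U ⟶ X} {S S' : ReflRel X}

theorem diag_comp_eq_comp_s0 {mt : (U ⨯ U : C) ⟶ S.R} (h0 : mt ≫ S.d0 = prod.fst ≫ m)
    (h1 : mt ≫ S.d1 = prod.snd ≫ m) : diag U ≫ mt = m ≫ S.s0 :=
  S.jm _ _
    (by rw [Category.assoc, h0, ← Category.assoc, prod.lift_fst, Category.assoc, S.r0]; simp)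
    (by rw [Category.assoc, h1, ← Category.assoc, prod.lift_snd, Category.assoc, S.r1]; simp)

theorem NormalTo.le (hS : StronglySplit S.d0 S.s0) (hN : NormalTo m S) (hN' : NormalTo m S') :
    S ≤ S' := by
  obtain ⟨mt, hpb0, hpb1⟩ := hN
  obtain ⟨mt', hpb0', hpb1'⟩ := hN'
  have hjee : JointlyExtremallyEpic mt S.s0 :=
    hS mt m prod.fst (diag U) hpb0 (prod.lift_fst _ _) (diag_comp_eq_comp_s0 hpb0.w hpb1.w)
  exact ReflRel.le_of_jointlyExtremallyEpic hjee (by rw [hpb0.w, hpb0'.w])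
    (by rw [hpb1.w, hpb1'.w])

end Normal

/-- A `Σ`-protomodular category is a `Σ`-Mal'tsev category, and in it a monomorphism is
normal to at most one `Σ`-equivalence relation. -/
theorem sigma_protomodular_properties [HasFiniteLimits C] (Sig : SigClass C)
    (hfib : Fibrational Sig) (hpm : SigmaProtomodular Sig) :
    SigmaMaltsev Sig ∧
    ∀ ⦃U X : C⦄ (m : U ⟶ X), Mono m →
      ∀ (S S' : ReflRel X), S.IsEquiv → S'.IsEquiv →
        Sig S.d0 S.s0 → Sig S'.d0 S'.s0 →
        NormalTo m S → NormalTo m S' →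
        ∃ φ : S.R ≅ S'.R, φ.hom ≫ S'.d0 = S.d0 ∧ φ.hom ≫ S'.d1 = S.d1 := by
  refine ⟨sigmaMaltsev_of_sigmaProtomodular hfib hpm, ?_⟩
  intro U X m _ S S' _ _ hSig hSig' hN hN'
  exact ReflRel.exists_iso_of_le_of_le (hN.le (hpm _ _ S.r0 hSig) hN')
    (hN'.le (hpm _ _ S'.r0 hSig') hN)
end
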